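/- If x : [1] → C is a 1-simplex (a single arrow from c to c') and x' is any object of C̃(c,c'), then there is at most one arrow x → x' in C̃(c,c'). -/

import Mathlib

open CategoryTheory

/-- An arrow in a category "is an identity" if its source and target coincide and it is
the identity of that object. -/
def IsIdArrow {C : Type*} [Category C] {X Y : C} (f : X ⟶ Y) : Prop :=
  ∃ h : X = Y, f = eqToHom h

/-- The relation `∼` of the paper on parallel maps of chains `a_*, b_* : x → x'` in the
category of simplices `Δ/C`: `a_* ∼ b_*` iff `x'(min (a i) (b i) → max (a i) (b i))` is an
identity for every `i`.  Here a chain (an `n`-simplex of the nerve of `C`) is a functor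
`Fin (n+1) ⥤ C` from the finite ordinal `[n]`. -/
def SimRel {C : Type*} [Category C] {n n' : ℕ} (x' : Fin (n' + 1) ⥤ C)
    (a b : Fin (n + 1) →o Fin (n' + 1)) : Prop :=
  ∀ i : Fin (n + 1),
    IsIdArrow (x'.map (homOfLE (min_le_max : min (a i) (b i) ≤ max (a i) (b i))))

/-- `a : [n] → [n']` underlies an arrow of `Δ/C` from the chain `x` to the chain `x'`
precisely when `x' ∘ a = x`. -/
def ChainCompat {C : Type*} [Category C] {n n' : ℕ} (x : Fin (n + 1) ⥤ C)
    (x' : Fin (n' + 1) ⥤ C) (a : Fin (n + 1) →o Fin (n' + 1)) : Prop :=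
  a.monotone.functor ⋙ x' = x

/-- The arrows `x → x'` of the category of simplices `Δ/C`. -/
def ChainArrow {C : Type*} [Category C] {n n' : ℕ} (x : Fin (n + 1) ⥤ C)
    (x' : Fin (n' + 1) ⥤ C) : Type _ :=
  { a : Fin (n + 1) →o Fin (n' + 1) // ChainCompat x x' a }
/-- A chain `x : [n] → C` is nondegenerate if none of its elementary arrows
`x(i → i+1)` is an identity. -/
def NondegChain {C : Type*} [Category C] {n : ℕ} (x : Fin (n + 1) ⥤ C) : Prop :=
  ∀ i : Fin n, ¬ IsIdArrow (x.map (homOfLE (Fin.castSucc_le_succ i)))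

/-- The condition for an arrow `a_* : x → x'` of `Δ/C` to preserve the first element
up to identities, i.e. `x'(0 → a 0) = id`. -/
def PreservesFirst {C : Type*} [Category C] {n n' : ℕ} (x' : Fin (n' + 1) ⥤ C)
    (a : Fin (n + 1) →o Fin (n' + 1)) : Prop :=
  IsIdArrow (x'.map (homOfLE (Fin.zero_le (a 0))))

/-- The condition for an arrow `a_* : x → x'` of `Δ/C` to preserve the last element
up to identities, i.e. `x'(a n → n') = id`. -/
def PreservesLast {C : Type*} [Category C] {n n' : ℕ} (x' : Fin (n' + 1) ⥤ C)
    (a : Fin (n + 1) →o Fin (n' + 1)) : Prop :=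
  IsIdArrow (x'.map (homOfLE (Fin.le_last (a (Fin.last n)))))

/-!
Both vertices of a 1-simplex are endpoints, so endpoint preservation says that
`x'(0 → a 0)`, `x'(0 → b 0)`, `x'(a 1 → n')` and `x'(b 1 → n')` are identities.
Identity arrows satisfy two-out-of-three, so `x'(min → max)` is an identity at both vertices.
-/

namespace IsIdArrow

variable {C : Type*} [Category C] {X Y Z : C} {f : X ⟶ Y} {g : Y ⟶ Z}

lemma of_comp_left (hf : IsIdArrow f) (hfg : IsIdArrow (f ≫ g)) : IsIdArrow g := by
  obtain ⟨rfl, rfl⟩ := hf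
  simpa using hfg

lemma of_comp_right (hg : IsIdArrow g) (hfg : IsIdArrow (f ≫ g)) : IsIdArrow f := by
  obtain ⟨rfl, rfl⟩ := hg
  simpa using hfg

end IsIdArrow

section Preorder

variable {C : Type*} [Category C] {P : Type*} [Preorder P] (F : P ⥤ C)

lemma isIdArrow_map_homOfLE_congr {p q p' q' : P} (hp : p = p') (hq : q = q') {h : p ≤ q}
    {h' : p' ≤ q'} (hF : IsIdArrow (F.map (homOfLE h))) : IsIdArrow (F.map (homOfLE h')) := by
  subst hp hq
  exact hF

lemma map_homOfLE_trans {p q r : P} (hpq : p ≤ q) (hqr : q ≤ r) :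
    F.map (homOfLE (hpq.trans hqr)) = F.map (homOfLE hpq) ≫ F.map (homOfLE hqr) := by
  rw [← F.map_comp, homOfLE_comp]

lemma isIdArrow_map_homOfLE_of_trans_left {p q r : P} (hpq : p ≤ q) (hqr : q ≤ r)
    (h₁ : IsIdArrow (F.map (homOfLE hpq))) (h₂ : IsIdArrow (F.map (homOfLE (hpq.trans hqr)))) :
    IsIdArrow (F.map (homOfLE hqr)) :=
  h₁.of_comp_left (map_homOfLE_trans F hpq hqr ▸ h₂)

lemma isIdArrow_map_homOfLE_of_trans_right {p q r : P} (hpq : p ≤ q) (hqr : q ≤ r)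
    (h₁ : IsIdArrow (F.map (homOfLE hqr))) (h₂ : IsIdArrow (F.map (homOfLE (hpq.trans hqr)))) :
    IsIdArrow (F.map (homOfLE hpq)) :=
  h₁.of_comp_right (map_homOfLE_trans F hpq hqr ▸ h₂)

end Preorder

section LinearOrder

variable {C : Type*} [Category C] {P : Type*} [LinearOrder P] (F : P ⥤ C)

lemma isIdArrow_map_min_le_max_of_isIdArrow_from {p q r : P} {hpq : p ≤ q} {hpr : p ≤ r}
    (hq : IsIdArrow (F.map (homOfLE hpq))) (hr : IsIdArrow (F.map (homOfLE hpr))) :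
    IsIdArrow (F.map (homOfLE (min_le_max : min q r ≤ max q r))) := by
  rcases le_total q r with hqr | hrq
  · exact isIdArrow_map_homOfLE_congr F (min_eq_left hqr).symm (max_eq_right hqr).symm
      (isIdArrow_map_homOfLE_of_trans_left F hpq hqr hq hr)
  · exact isIdArrow_map_homOfLE_congr F (min_eq_right hrq).symm (max_eq_left hrq).symm
      (isIdArrow_map_homOfLE_of_trans_left F hpr hrq hr hq)

lemma isIdArrow_map_min_le_max_of_isIdArrow_to {q r s : P} {hqs : q ≤ s} {hrs : r ≤ s}
    (hq : IsIdArrow (F.map (homOfLE hqs))) (hr : IsIdArrow (F.map (homOfLE hrs))) :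
    IsIdArrow (F.map (homOfLE (min_le_max : min q r ≤ max q r))) := by
  rcases le_total q r with hqr | hrq
  · exact isIdArrow_map_homOfLE_congr F (min_eq_left hqr).symm (max_eq_right hqr).symm
      (isIdArrow_map_homOfLE_of_trans_right F hqr hrs hr hq)
  · exact isIdArrow_map_homOfLE_congr F (min_eq_right hrq).symm (max_eq_left hrq).symm
      (isIdArrow_map_homOfLE_of_trans_right F hrq hqs hq hr)

end LinearOrder

theorem tilde_at_most_one_arrow_from_one_simplex_general {C : Type*} [Category C] {n' : ℕ}
    (x' : Fin (n' + 1) ⥤ C)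
    (a b : Fin 2 →o Fin (n' + 1))
    (hafirst : PreservesFirst x' a) (halast : PreservesLast x' a)
    (hbfirst : PreservesFirst x' b) (hblast : PreservesLast x' b) :
    SimRel x' a b := by
  rw [SimRel, Fin.forall_fin_two]
  exact ⟨isIdArrow_map_min_le_max_of_isIdArrow_from x' hafirst hbfirst,
    isIdArrow_map_min_le_max_of_isIdArrow_to x' halast hblast⟩

/-- if `x : [1] → C` is a 1-simplex (a single arrow from `c` to `c'`) and
`x'` is any object of `C̃(c,c')`, then there is at most one arrow `x → x'` in `C̃(c,c')`:
any two endpoint-preserving maps of chains `a_*, b_* : x → x'` are `∼`-equivalent. -/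
theorem tilde_at_most_one_arrow_from_one_simplex {C : Type*} [Category C] {c c' : C}
    (hcc : c ≠ c') {n' : ℕ} (x : Fin 2 ⥤ C) (x' : Fin (n' + 1) ⥤ C)
    (hx0 : x.obj 0 = c) (hxl : x.obj (Fin.last 1) = c')
    (hx'0 : x'.obj 0 = c) (hx'l : x'.obj (Fin.last n') = c')
    (hx : NondegChain x) (hx' : NondegChain x')
    (a b : Fin 2 →o Fin (n' + 1))
    (hacomp : ChainCompat x x' a) (hafirst : PreservesFirst x' a) (halast : PreservesLast x' a)
    (hbcomp : ChainCompat x x' b) (hbfirst : PreservesFirst x' b) (hblast : PreservesLast x' b) :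
    SimRel x' a b :=
  tilde_at_most_one_arrow_from_one_simplex_general x' a b hafirst halast hbfirst hblast
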